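/- Let U ⊆ ℝ be an open set with 2r³ + 1 ≠ 0 for all r ∈ U, let φ(r) = 12^{2/3}·r²/(4r³+2) and ψ(r) = -2·12^{1/3}·r/(2r³+1), and suppose the derivative φ'(r) ≠ 0 for every r ∈ U. Let H : ℝ → ℝ be six times differentiable on an open set V ⊆ ℝ containing φ(U), and suppose H(φ(r)) = ψ(r) for all r ∈ U. Then H satisfies Noth's equation at every point of φ(U): for all t ∈ φ(U), 10·(H''(t))³·H⁽⁶⁾(t) − 70·(H''(t))²·H⁽³⁾(t)·H⁽⁵⁾(t) − 49·(H''(t))²·(H⁽⁴⁾(t))² + 280·H''(t)·(H⁽³⁾(t))²·H⁽⁴⁾(t) − 175·(H⁽³⁾(t))⁴ = 0. -/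

import Mathlib

/-!
Along the curve `r ↦ (t, y) = (r² / (2r³ + 1), r / (2r³ + 1))` the derivatives `dᵏy/dtᵏ` are
obtained by repeatedly differentiating in `r` and dividing by `dt/dr = D(r) / (2r³ + 1)²`, where
`D = 2r - 2r⁴`. By the quotient rule `dᵏ⁺¹y/dtᵏ⁺¹ = Nₖ(r) / D(r)^(2k+1)` for explicit polynomials
`Nₖ`, so every term of Noth's expression carries the factor `D⁻²⁰` and the equation reduces to the
polynomial identity `10 N₁³N₅ - 70 N₁²N₂N₄ - 49 N₁²N₃² + 280 N₁N₂²N₃ - 175 N₂⁴ = 0`.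
The given `(φ, ψ)` is `(a t, b y)` for constants `a, b`; this rescaling multiplies Noth's expression
by `b⁴ / a¹²`.
-/

open Topology Polynomial

/-- Noth's equation at a point `t` for a function `H`, expressed via iterated derivatives. -/
def NothEqAt (H : ℝ → ℝ) (t : ℝ) : Prop :=
  10 * (iteratedDeriv 2 H t) ^ 3 * iteratedDeriv 6 H t
    - 70 * (iteratedDeriv 2 H t) ^ 2 * iteratedDeriv 3 H t * iteratedDeriv 5 H t
    - 49 * (iteratedDeriv 2 H t) ^ 2 * (iteratedDeriv 4 H t) ^ 2
    + 280 * iteratedDeriv 2 H t * (iteratedDeriv 3 H t) ^ 2 * iteratedDeriv 4 H t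
    - 175 * (iteratedDeriv 3 H t) ^ 4 = 0

section Parametrized

variable {𝕜 : Type*} [NontriviallyNormedField 𝕜]

theorem deriv_eq_div_of_comp_eventuallyEq {G T A : 𝕜 → 𝕜} {x T' A' : 𝕜}
    (hG : DifferentiableAt 𝕜 G (T x)) (hT : HasDerivAt T T' x) (hT' : T' ≠ 0)
    (hA : HasDerivAt A A' x) (h : G ∘ T =ᶠ[𝓝 x] A) : deriv G (T x) = A' / T' := by
  rw [eq_div_iff hT']
  exact ((hG.hasDerivAt.comp x hT).congr_of_eventuallyEq h.symm).unique hA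

theorem iteratedDeriv_comp_eq_of_hasDerivAt {W : Set 𝕜} (hW : IsOpen W) {H T T' : 𝕜 → 𝕜}
    {A : ℕ → 𝕜 → 𝕜} {n : ℕ} (hT : ∀ x ∈ W, HasDerivAt T (T' x) x) (hT' : ∀ x ∈ W, T' x ≠ 0)
    (hA : ∀ k < n, ∀ x ∈ W, HasDerivAt (A k) (A (k + 1) x * T' x) x)
    (hH : ∀ k < n, ∀ x ∈ W, DifferentiableAt 𝕜 (iteratedDeriv k H) (T x))
    (h0 : ∀ x ∈ W, H (T x) = A 0 x) :
    ∀ k ≤ n, ∀ x ∈ W, iteratedDeriv k H (T x) = A k x := by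
  intro k
  induction k with
  | zero => simpa using h0
  | succ k ih =>
    intro hk x hx
    have hcomp : iteratedDeriv k H ∘ T =ᶠ[𝓝 x] A k := by
      filter_upwards [hW.mem_nhds hx] with y hy using ih (by omega) y hy
    rw [iteratedDeriv_succ, deriv_eq_div_of_comp_eventuallyEq (hH k hk x hx) (hT x hx) (hT' x hx)
      (hA k hk x hx) hcomp, mul_div_cancel_right₀ _ (hT' x hx)]

end Parametrized

namespace NothCurve

noncomputable section

def t (r : ℝ) : ℝ := r ^ 2 / (2 * r ^ 3 + 1)

def y (r : ℝ) : ℝ := r / (2 * r ^ 3 + 1)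

def den : ℝ[X] := 2 * X - 2 * X ^ 4

def dt (r : ℝ) : ℝ := den.eval r / (2 * r ^ 3 + 1) ^ 2

def num : ℕ → ℝ[X]
  | 0 => 1 - 4 * X ^ 3
  | k + 1 => (2 * X ^ 3 + 1) ^ 2 *
      (derivative (num k) * den - (2 * k + 1 : ℝ[X]) * num k * derivative den)

def yDeriv : ℕ → ℝ → ℝ
  | 0 => y
  | k + 1 => fun r => (num k).eval r / den.eval r ^ (2 * k + 1)

theorem hasDerivAt_t {r : ℝ} (hr : 2 * r ^ 3 + 1 ≠ 0) : HasDerivAt t (dt r) r := by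
  refine ((hasDerivAt_pow 2 r).fun_div
    (((hasDerivAt_pow 3 r).const_mul 2).add_const 1) hr).congr_deriv ?_
  simp only [dt, den, eval_sub, eval_mul, eval_pow, eval_X, eval_ofNat]
  push_cast
  ring

theorem hasDerivAt_yDeriv (k : ℕ) {r : ℝ} (hr : 2 * r ^ 3 + 1 ≠ 0) (hden : den.eval r ≠ 0) :
    HasDerivAt (yDeriv k) (yDeriv (k + 1) r * dt r) r := by
  cases k with
  | zero =>
    refine ((hasDerivAt_id' r).fun_div
      (((hasDerivAt_pow 3 r).const_mul 2).add_const 1) hr).congr_deriv ?_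
    simp only [yDeriv, dt, num, eval_sub, eval_mul, eval_pow, eval_X, eval_ofNat, eval_one]
    field_simp
    push_cast
    ring
  | succ k =>
    refine ((Polynomial.hasDerivAt (num k) r).fun_div
      ((Polynomial.hasDerivAt den r).fun_pow (2 * k + 1)) (pow_ne_zero _ hden)).congr_deriv ?_
    simp only [yDeriv, dt, num, eval_sub, eval_mul, eval_pow, eval_X, eval_ofNat, eval_one,
      eval_add, eval_natCast, Nat.add_sub_cancel]
    field_simp
    push_cast
    ring

theorem num_one : num 1 = -2 - 16 * X ^ 3 - 48 * X ^ 6 - 64 * X ^ 9 - 32 * X ^ 12 := by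
  rw [num, num]
  simp only [den, derivative_sub, derivative_mul, derivative_X_pow, derivative_ofNat, derivative_X,
    derivative_one, map_natCast]
  push_cast
  ring

theorem num_two : num 2 = 12 - 720 * X ^ 6 - 3840 * X ^ 9 - 8640 * X ^ 12 - 9216 * X ^ 15
    - 3840 * X ^ 18 := by
  rw [num, num_one]
  simp only [den, derivative_sub, derivative_mul, derivative_neg, derivative_X_pow,
    derivative_ofNat, derivative_X, map_natCast]
  push_cast
  ring

theorem num_three : num 3 = -120 - 54720 * X ^ 9 - 414720 * X ^ 12 - 1347840 * X ^ 15
    - 2304000 * X ^ 18 - 2073600 * X ^ 21 - 829440 * X ^ 24 - 61440 * X ^ 27 := by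
  rw [num, num_two]
  simp only [den, derivative_sub, derivative_mul, derivative_X_pow, derivative_ofNat, derivative_X,
    map_natCast]
  push_cast
  ring

theorem num_four : num 4 = 1680 - 20160 * X ^ 6 - 245760 * X ^ 9 - 7102080 * X ^ 12
    - 60618240 * X ^ 15 - 249984000 * X ^ 18 - 586414080 * X ^ 21 - 816721920 * X ^ 24
    - 654581760 * X ^ 27 - 265420800 * X ^ 30 - 36864000 * X ^ 33 - 491520 * X ^ 36 := by
  rw [num, num_three]
  simp only [den, derivative_sub, derivative_mul, derivative_neg, derivative_X_pow,
    derivative_ofNat, derivative_X, map_natCast]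
  push_cast
  ring

theorem num_five : num 5 = -30240 + 483840 * X ^ 6 - 241920 * X ^ 9 - 60238080 * X ^ 12
    - 1296691200 * X ^ 15 - 11542487040 * X ^ 18 - 55529349120 * X ^ 21 - 162570240000 * X ^ 24
    - 303836037120 * X ^ 27 - 363971543040 * X ^ 30 - 269340180480 * X ^ 33
    - 111786393600 * X ^ 36 - 20808990720 * X ^ 39 - 990904320 * X ^ 42 := by
  rw [num, num_four]
  simp only [den, derivative_sub, derivative_mul, derivative_X_pow, derivative_ofNat, derivative_X,
    map_natCast]
  push_cast
  ring

theorem num_noth : 10 * num 1 ^ 3 * num 5 - 70 * num 1 ^ 2 * num 2 * num 4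
    - 49 * num 1 ^ 2 * num 3 ^ 2 + 280 * num 1 * num 2 ^ 2 * num 3 - 175 * num 2 ^ 4 = 0 := by
  rw [num_one, num_two, num_three, num_four, num_five]
  ring

theorem yDeriv_noth (r : ℝ) :
    10 * yDeriv 2 r ^ 3 * yDeriv 6 r - 70 * yDeriv 2 r ^ 2 * yDeriv 3 r * yDeriv 5 r
      - 49 * yDeriv 2 r ^ 2 * yDeriv 4 r ^ 2 + 280 * yDeriv 2 r * yDeriv 3 r ^ 2 * yDeriv 4 r
      - 175 * yDeriv 3 r ^ 4 = 0 := by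
  have h := congrArg (eval r) num_noth
  simp only [eval_sub, eval_add, eval_mul, eval_pow, eval_ofNat, eval_zero] at h
  simp only [yDeriv]
  linear_combination (den.eval r)⁻¹ ^ 20 * h

theorem nothEqAt_mul_t {U : Set ℝ} (hU : IsOpen U) {H : ℝ → ℝ} {a b : ℝ}
    (hU₀ : ∀ r ∈ U, 2 * r ^ 3 + 1 ≠ 0) (hdt : ∀ r ∈ U, a * dt r ≠ 0)
    (hH : ∀ k < 6, ∀ r ∈ U, DifferentiableAt ℝ (iteratedDeriv k H) (a * t r))
    (hpar : ∀ r ∈ U, H (a * t r) = b * y r) {r : ℝ} (hr : r ∈ U) : NothEqAt H (a * t r) := by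
  have ha : a ≠ 0 := left_ne_zero_of_mul (hdt r hr)
  have hstep (k : ℕ) (s : ℝ) (hs : s ∈ U) : HasDerivAt (fun s => b / a ^ k * yDeriv k s)
      (b / a ^ (k + 1) * yDeriv (k + 1) s * (a * dt s)) s := by
    have hden : den.eval s ≠ 0 := (div_ne_zero_iff.mp (right_ne_zero_of_mul (hdt s hs))).1
    refine ((hasDerivAt_yDeriv k (hU₀ s hs) hden).const_mul (b / a ^ k)).congr_deriv ?_
    field_simp
    ring
  have hderivs : ∀ k ≤ 6, ∀ s ∈ U, iteratedDeriv k H (a * t s) = b / a ^ k * yDeriv k s :=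
    iteratedDeriv_comp_eq_of_hasDerivAt hU (fun s hs => (hasDerivAt_t (hU₀ s hs)).const_mul a)
      hdt (fun k _ s hs => hstep k s hs) hH (fun s hs => by simp [yDeriv, hpar s hs])
  unfold NothEqAt
  rw [hderivs 2 (by norm_num) r hr, hderivs 3 (by norm_num) r hr, hderivs 4 (by norm_num) r hr,
    hderivs 5 (by norm_num) r hr, hderivs 6 (by norm_num) r hr]
  linear_combination b ^ 4 / a ^ 12 * yDeriv_noth r

end

end NothCurve

theorem noth_parametrization_recovered_inverted
    (U V : Set ℝ) (hU : IsOpen U) (hUne : ∀ r ∈ U, 2 * r ^ 3 + 1 ≠ (0 : ℝ))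
    (φ ψ H : ℝ → ℝ)
    (hφ : ∀ r : ℝ, φ r = (12 : ℝ) ^ ((2 : ℝ) / 3) * r ^ 2 / (4 * r ^ 3 + 2))
    (hψ : ∀ r : ℝ, ψ r = -(2 * (12 : ℝ) ^ ((1 : ℝ) / 3) * r) / (2 * r ^ 3 + 1))
    (hφ' : ∀ r ∈ U, deriv φ r ≠ 0)
    (hVU : φ '' U ⊆ V)
    (hdiff : ∀ k < 6, ∀ t ∈ V, DifferentiableAt ℝ (iteratedDeriv k H) t)
    (hpar : ∀ r ∈ U, H (φ r) = ψ r) :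
    ∀ t ∈ φ '' U, NothEqAt H t := by
  have hφt : φ = fun r => (12 : ℝ) ^ ((2 : ℝ) / 3) / 2 * NothCurve.t r := by
    funext r
    rw [hφ, NothCurve.t, show (4 * r ^ 3 + 2 : ℝ) = 2 * (2 * r ^ 3 + 1) by ring, ← div_div]
    ring
  have hψy (r : ℝ) : ψ r = -2 * (12 : ℝ) ^ ((1 : ℝ) / 3) * NothCurve.y r := by
    rw [hψ, NothCurve.y]
    ring
  subst hφt
  rintro _ ⟨r, hr, rfl⟩
  refine NothCurve.nothEqAt_mul_t hU hUne (fun s hs => ?_)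
    (fun k hk s hs => hdiff k hk _ (hVU ⟨s, hs, rfl⟩)) (fun s hs => (hpar s hs).trans (hψy s)) hr
  rw [← ((NothCurve.hasDerivAt_t (hUne s hs)).const_mul _).deriv]
  exact hφ' s hs
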